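/- For any point x in MSS_18, the 26-fundamental group Π_1^26(MSS_18, x) is trivial. -/
import Mathlib


/- ## General framework for digital topology -/

variable {α : Type*}

/-- A (2,κ)-continuous path of length `m` in the digital image `X`. -/
def PathOn (X : Set α) (κ : α → α → Prop) (m : ℕ) (f : ℕ → α) : Prop :=
  (∀ i ≤ m, f i ∈ X) ∧ ∀ i < m, f i = f (i + 1) ∨ κ (f i) (f (i + 1))

/-- A κ-loop of length `m` based at `x0`. -/
def IsLoop (X : Set α) (κ : α → α → Prop) (x0 : α) (m : ℕ) (f : ℕ → α) : Prop :=
  PathOn X κ m f ∧ f 0 = x0 ∧ f m = x0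

/-- `f'` (of length `m'`) is a trivial extension of `f` (of length `m`):
it traverses the same path, with pauses. -/
def TrivExt (m : ℕ) (f : ℕ → α) (m' : ℕ) (f' : ℕ → α) : Prop :=
  ∃ φ : ℕ → ℕ, φ 0 = 0 ∧ φ m' = m ∧
    (∀ i < m', φ (i + 1) = φ i ∨ φ (i + 1) = φ i + 1) ∧
    ∀ i ≤ m', f' i = f (φ i)

/-- A homotopy between loops `F` and `G` of the same length `m`, holding the
endpoints fixed at `x0`. -/
def HtpyFixed (X : Set α) (κ : α → α → Prop) (x0 : α) (m M : ℕ) (F G : ℕ → α) : Prop :=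
  ∃ H : ℕ → ℕ → α,
    (∀ s ≤ m, ∀ t ≤ M, H s t ∈ X) ∧
    (∀ s ≤ m, H s 0 = F s ∧ H s M = G s) ∧
    (∀ t ≤ M, ∀ s, s < m → (H s t = H (s + 1) t ∨ κ (H s t) (H (s + 1) t))) ∧
    (∀ s ≤ m, ∀ t, t < M → (H s t = H s (t + 1) ∨ κ (H s t) (H s (t + 1)))) ∧
    (∀ t ≤ M, H 0 t = x0 ∧ H m t = x0)

/-- Two loops based at `x0` belong to the same loop class: they have trivial
extensions of a common length which are homotopic holding the endpoints fixed. -/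
def LoopEquiv (X : Set α) (κ : α → α → Prop) (x0 : α)
    (m : ℕ) (f : ℕ → α) (n : ℕ) (g : ℕ → α) : Prop :=
  ∃ m' f' g', TrivExt m f m' f' ∧ TrivExt n g m' g' ∧ ∃ M, HtpyFixed X κ x0 m' M f' g'

/-- The digital fundamental group `Π_1^κ(X,x0)` is trivial: every κ-loop based
at `x0` is in the class of the constant loop. -/
def Pi1Trivial (X : Set α) (κ : α → α → Prop) (x0 : α) : Prop :=
  ∀ m f, IsLoop X κ x0 m f → LoopEquiv X κ x0 m f 0 (fun _ => x0)

/-- Adjacent or equal. -/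
def AdjEq (κ : α → α → Prop) (a b : α) : Prop := a = b ∨ κ a b

/-- `H` is a κ-homotopy (of length `M`) from the identity map of `X` to a constant map. -/
def Contraction (X : Set α) (κ : α → α → Prop) (M : ℕ) (H : α → ℕ → α) : Prop :=
  (∀ x ∈ X, ∀ t ≤ M, H x t ∈ X) ∧
  (∀ x ∈ X, H x 0 = x) ∧
  (∃ p ∈ X, ∀ x ∈ X, H x M = p) ∧
  (∀ t ≤ M, ∀ x ∈ X, ∀ y ∈ X, κ x y → AdjEq κ (H x t) (H y t)) ∧
  (∀ x ∈ X, ∀ t, t < M → AdjEq κ (H x t) (H x (t + 1)))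

/-- `X` is κ-contractible. -/
def Contractible (X : Set α) (κ : α → α → Prop) : Prop :=
  ∃ M H, Contraction X κ M H

/-- `(X,x0)` is pointed κ-contractible: a contraction to `x0` holding `x0` fixed. -/
def PointedContractible (X : Set α) (κ : α → α → Prop) (x0 : α) : Prop :=
  ∃ M H, Contraction X κ M H ∧ (∀ t ≤ M, H x0 t = x0) ∧ ∀ x ∈ X, H x M = x0

/-- The subset `Y` of `X` is κ-nullhomotopic in `X`: its inclusion map is
homotopic in `X` to a constant map. -/
def NullhomotopicIn (Y X : Set α) (κ : α → α → Prop) : Prop :=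
  ∃ M, ∃ H : α → ℕ → α,
    (∀ y ∈ Y, ∀ t ≤ M, H y t ∈ X) ∧
    (∀ y ∈ Y, H y 0 = y) ∧
    (∃ p ∈ X, ∀ y ∈ Y, H y M = p) ∧
    (∀ t ≤ M, ∀ x ∈ Y, ∀ y ∈ Y, κ x y → AdjEq κ (H x t) (H y t)) ∧
    (∀ y ∈ Y, ∀ t, t < M → AdjEq κ (H y t) (H y (t + 1)))

/-- `P` is a κ-path subset of `X`: the image of a κ-path in `X`. -/
def IsPathSubset (P X : Set α) (κ : α → α → Prop) : Prop :=
  ∃ m f, PathOn X κ m f ∧ (∀ i ≤ m, f i ∈ P) ∧ ∀ p ∈ P, ∃ i ≤ m, f i = p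

/-- `X` has no κ-hole: every κ-path subset of `X` is κ-nullhomotopic in `X`. -/
def NoHole (X : Set α) (κ : α → α → Prop) : Prop :=
  ∀ P : Set α, IsPathSubset P X κ → NullhomotopicIn P X κ

/-- `X` is κ-connected (and nonempty). -/
def ConnectedDig (X : Set α) (κ : α → α → Prop) : Prop :=
  X.Nonempty ∧ ∀ a ∈ X, ∀ b ∈ X, ∃ m f, PathOn X κ m f ∧ f 0 = a ∧ f m = b

/-- The κ-component of `x` in `X`. -/
def Component (X : Set α) (κ : α → α → Prop) (x : α) : Set α :=
  {y | y ∈ X ∧ ∃ m f, PathOn X κ m f ∧ f 0 = x ∧ f m = y}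

/-- A loop-preserving homotopy from the loop `f` to the loop `g`
(each stage is a loop; the basepoint may move). -/
def LoopPresHtpy (X : Set α) (κ : α → α → Prop) (m M : ℕ)
    (f g : ℕ → α) (H : ℕ → ℕ → α) : Prop :=
  (∀ s ≤ m, ∀ t ≤ M, H s t ∈ X) ∧
  (∀ s ≤ m, H s 0 = f s ∧ H s M = g s) ∧
  (∀ t ≤ M, ∀ s, s < m → (H s t = H (s + 1) t ∨ κ (H s t) (H (s + 1) t))) ∧
  (∀ s ≤ m, ∀ t, t < M → (H s t = H s (t + 1) ∨ κ (H s t) (H s (t + 1)))) ∧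
  (∀ t ≤ M, H 0 t = H m t)

/-- `X` has no κ-loophole: every κ-loop in `X` is nullhomotopic in `X` by a
loop-preserving homotopy. -/
def NoLoophole (X : Set α) (κ : α → α → Prop) : Prop :=
  ∀ m f, PathOn X κ m f → f 0 = f m →
    ∃ p ∈ X, ∃ M H, LoopPresHtpy X κ m M f (fun _ => p) H

/- ## Concrete adjacencies and images -/

/-- 6-adjacency (c₁-adjacency) on ℤ³. -/
def adj6 (p q : ℤ × ℤ × ℤ) : Prop :=
  |p.1 - q.1| + |p.2.1 - q.2.1| + |p.2.2 - q.2.2| = 1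

/-- 26-adjacency (c₃-adjacency) on ℤ³. -/
def adj26 (p q : ℤ × ℤ × ℤ) : Prop :=
  p ≠ q ∧ |p.1 - q.1| ≤ 1 ∧ |p.2.1 - q.2.1| ≤ 1 ∧ |p.2.2 - q.2.2| ≤ 1

/-- 18-adjacency (c₂-adjacency) on ℤ³. -/
def adj18 (p q : ℤ × ℤ × ℤ) : Prop :=
  adj26 p q ∧ (p.1 = q.1 ∨ p.2.1 = q.2.1 ∨ p.2.2 = q.2.2)

/-- 4-adjacency (c₁-adjacency) on ℤ². -/
def adj4 (p q : ℤ × ℤ) : Prop := |p.1 - q.1| + |p.2 - q.2| = 1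

/-- 8-adjacency (c₂-adjacency) on ℤ². -/
def adj8 (p q : ℤ × ℤ) : Prop := p ≠ q ∧ |p.1 - q.1| ≤ 1 ∧ |p.2 - q.2| ≤ 1

/-- 2-adjacency (c₁-adjacency) on ℤ. -/
def adj2 (m n : ℤ) : Prop := |m - n| = 1

/-- The 10-point digital 2-sphere `MSS₁₈`. -/
def MSS18 : Set (ℤ × ℤ × ℤ) :=
  {(0,0,0), (1,1,0), (1,2,0), (0,3,0), (-1,2,0),
   (-1,1,0), (0,1,-1), (0,2,-1), (0,2,1), (0,1,1)}

/-- The 6-point digital 2-sphere `MSS'₁₈ = MSS'₂₆`. -/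
def MSS18' : Set (ℤ × ℤ × ℤ) :=
  {(0,0,0), (1,1,0), (0,2,0), (-1,1,0), (0,1,-1), (0,1,1)}

/-- The digital 2-sphere `MSS₆ = [0,2]³ \ {(1,1,1)}`. -/
def MSS6 : Set (ℤ × ℤ × ℤ) :=
  {p | (0 ≤ p.1 ∧ p.1 ≤ 2) ∧ (0 ≤ p.2.1 ∧ p.2.1 ≤ 2) ∧ (0 ≤ p.2.2 ∧ p.2.2 ≤ 2) ∧ p ≠ (1,1,1)}

/-- The image `X = ([0,2]² × [0,1]) \ {(1,1,1)}` of Example 2.11. -/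
def Xbox : Set (ℤ × ℤ × ℤ) :=
  {p | (0 ≤ p.1 ∧ p.1 ≤ 2) ∧ (0 ≤ p.2.1 ∧ p.2.1 ≤ 2) ∧ (0 ≤ p.2.2 ∧ p.2.2 ≤ 1) ∧ p ≠ (1,1,1)}

/- ## Proof of stmt7 -/

abbrev P3 := ℤ × ℤ × ℤ

instance decAdj26 (p q : P3) : Decidable (adj26 p q) := by unfold adj26; infer_instance
instance decAdjEq26 (p q : P3) : Decidable (AdjEq adj26 p q) := by unfold AdjEq; infer_instance

/-- Pointed contractibility implies trivial fundamental group. -/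
lemma pi1_of_pc {X : Set α} {κ : α → α → Prop} {x0 : α}
    (h : PointedContractible X κ x0) : Pi1Trivial X κ x0 := by
  obtain ⟨M, C, ⟨hX, h0, -, hs, ht⟩, hfix, hend⟩ := h
  rintro m f ⟨⟨hmem, hadj⟩, hf0, hfm⟩
  refine ⟨m, f, (fun _ => x0), ⟨id, rfl, rfl, fun i _ => Or.inr rfl, fun i _ => rfl⟩,
    ⟨fun _ => 0, rfl, rfl, fun i _ => Or.inl rfl, fun i _ => rfl⟩,
    M, (fun s t => C (f s) t), ?_, ?_, ?_, ?_, ?_⟩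
  · intro s hs' t ht'; exact hX (f s) (hmem s hs') t ht'
  · intro s hs'; exact ⟨h0 (f s) (hmem s hs'), hend (f s) (hmem s hs')⟩
  · intro t ht' s hsm
    rcases hadj s hsm with heq | hk
    · exact Or.inl (by show C (f s) t = C (f (s+1)) t; rw [heq])
    · exact hs t ht' (f s) (hmem s (le_of_lt hsm)) (f (s+1)) (hmem (s+1) hsm) hk
  · intro s hs' t htM; exact ht (f s) (hmem s hs') t htM
  · intro t ht'
    constructor
    · show C (f 0) t = x0; rw [hf0]; exact hfix t ht'
    · show C (f m) t = x0; rw [hfm]; exact hfix t ht'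

def MSS18list : List P3 :=
  [(0,0,0), (1,1,0), (1,2,0), (0,3,0), (-1,2,0),
   (-1,1,0), (0,1,-1), (0,2,-1), (0,2,1), (0,1,1)]

lemma mem_MSS18 (p : P3) : p ∈ MSS18 ↔ p ∈ MSS18list := by
  simp [MSS18, MSS18list]

/-- Build a homotopy function from a table. -/
def mkH (tbl : List (List (P3 × P3))) (d : P3) : P3 → ℕ → P3 :=
  fun p t => ((tbl.getD t []).lookup p).getD d

/-- Decidable list version of pointed contraction. -/
def PCList (tbl : List (List (P3 × P3))) (M : ℕ) (x0 : P3) : Prop :=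
  x0 ∈ MSS18list ∧
  (∀ x ∈ MSS18list, ∀ t ≤ M, mkH tbl x0 x t ∈ MSS18list) ∧
  (∀ x ∈ MSS18list, mkH tbl x0 x 0 = x) ∧
  (∀ x ∈ MSS18list, mkH tbl x0 x M = x0) ∧
  (∀ t ≤ M, ∀ x ∈ MSS18list, ∀ y ∈ MSS18list, adj26 x y →
      AdjEq adj26 (mkH tbl x0 x t) (mkH tbl x0 y t)) ∧
  (∀ x ∈ MSS18list, ∀ t, t < M → AdjEq adj26 (mkH tbl x0 x t) (mkH tbl x0 x (t+1))) ∧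
  (∀ t ≤ M, mkH tbl x0 x0 t = x0)

instance (tbl M x0) : Decidable (PCList tbl M x0) := by unfold PCList; infer_instance

lemma pc_of_tbl (tbl : List (List (P3 × P3))) (M : ℕ) (x0 : P3)
    (h : PCList tbl M x0) : PointedContractible MSS18 adj26 x0 := by
  obtain ⟨hx0, hX, h0, hM, hs, ht, hfix⟩ := h
  refine ⟨M, mkH tbl x0, ⟨?_, ?_, ⟨x0, (mem_MSS18 x0).2 hx0, ?_⟩, ?_, ?_⟩, ?_, ?_⟩
  · intro x hx t htM; exact (mem_MSS18 _).2 (hX x ((mem_MSS18 x).1 hx) t htM)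
  · intro x hx; exact h0 x ((mem_MSS18 x).1 hx)
  · intro x hx; exact hM x ((mem_MSS18 x).1 hx)
  · intro t htM x hx y hy hk
    exact hs t htM x ((mem_MSS18 x).1 hx) y ((mem_MSS18 y).1 hy) hk
  · intro x hx t htM; exact ht x ((mem_MSS18 x).1 hx) t htM
  · exact hfix
  · intro x hx; exact hM x ((mem_MSS18 x).1 hx)

def tblA : List (List (P3 × P3)) :=
  [[((0,0,0), (0,0,0)), ((1,1,0), (1,1,0)), ((1,2,0), (1,2,0)), ((0,3,0), (0,3,0)), ((-1,2,0), (-1,2,0)), ((-1,1,0), (-1,1,0)), ((0,1,-1), (0,1,-1)), ((0,2,-1), (0,2,-1)), ((0,2,1), (0,2,1)), ((0,1,1), (0,1,1))],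
   [((0,0,0), (0,0,0)), ((1,1,0), (0,0,0)), ((1,2,0), (1,1,0)), ((0,3,0), (1,2,0)), ((-1,2,0), (0,1,-1)), ((-1,1,0), (0,0,0)), ((0,1,-1), (0,0,0)), ((0,2,-1), (0,1,-1)), ((0,2,1), (1,1,0)), ((0,1,1), (0,0,0))],
   [((0,0,0), (0,0,0)), ((1,1,0), (0,0,0)), ((1,2,0), (0,0,0)), ((0,3,0), (1,1,0)), ((-1,2,0), (0,0,0)), ((-1,1,0), (0,0,0)), ((0,1,-1), (0,0,0)), ((0,2,-1), (0,0,0)), ((0,2,1), (0,0,0)), ((0,1,1), (0,0,0))],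
   [((0,0,0), (0,0,0)), ((1,1,0), (0,0,0)), ((1,2,0), (0,0,0)), ((0,3,0), (0,0,0)), ((-1,2,0), (0,0,0)), ((-1,1,0), (0,0,0)), ((0,1,-1), (0,0,0)), ((0,2,-1), (0,0,0)), ((0,2,1), (0,0,0)), ((0,1,1), (0,0,0))]]

def tblB : List (List (P3 × P3)) :=
  [[((0,0,0), (0,0,0)), ((1,1,0), (1,1,0)), ((1,2,0), (1,2,0)), ((0,3,0), (0,3,0)), ((-1,2,0), (-1,2,0)), ((-1,1,0), (-1,1,0)), ((0,1,-1), (0,1,-1)), ((0,2,-1), (0,2,-1)), ((0,2,1), (0,2,1)), ((0,1,1), (0,1,1))],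
   [((0,0,0), (1,1,0)), ((1,1,0), (1,1,0)), ((1,2,0), (1,1,0)), ((0,3,0), (1,2,0)), ((-1,2,0), (0,1,-1)), ((-1,1,0), (0,0,0)), ((0,1,-1), (1,1,0)), ((0,2,-1), (1,1,0)), ((0,2,1), (1,1,0)), ((0,1,1), (1,1,0))],
   [((0,0,0), (1,1,0)), ((1,1,0), (1,1,0)), ((1,2,0), (1,1,0)), ((0,3,0), (1,1,0)), ((-1,2,0), (1,1,0)), ((-1,1,0), (1,1,0)), ((0,1,-1), (1,1,0)), ((0,2,-1), (1,1,0)), ((0,2,1), (1,1,0)), ((0,1,1), (1,1,0))]]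

def tblC : List (List (P3 × P3)) :=
  [[((0,0,0), (0,0,0)), ((1,1,0), (1,1,0)), ((1,2,0), (1,2,0)), ((0,3,0), (0,3,0)), ((-1,2,0), (-1,2,0)), ((-1,1,0), (-1,1,0)), ((0,1,-1), (0,1,-1)), ((0,2,-1), (0,2,-1)), ((0,2,1), (0,2,1)), ((0,1,1), (0,1,1))],
   [((0,0,0), (1,1,0)), ((1,1,0), (1,2,0)), ((1,2,0), (1,2,0)), ((0,3,0), (1,2,0)), ((-1,2,0), (0,1,-1)), ((-1,1,0), (0,1,-1)), ((0,1,-1), (1,2,0)), ((0,2,-1), (1,2,0)), ((0,2,1), (1,2,0)), ((0,1,1), (1,2,0))],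
   [((0,0,0), (1,2,0)), ((1,1,0), (1,2,0)), ((1,2,0), (1,2,0)), ((0,3,0), (1,2,0)), ((-1,2,0), (1,2,0)), ((-1,1,0), (1,2,0)), ((0,1,-1), (1,2,0)), ((0,2,-1), (1,2,0)), ((0,2,1), (1,2,0)), ((0,1,1), (1,2,0))]]

def tblD : List (List (P3 × P3)) :=
  [[((0,0,0), (0,0,0)), ((1,1,0), (1,1,0)), ((1,2,0), (1,2,0)), ((0,3,0), (0,3,0)), ((-1,2,0), (-1,2,0)), ((-1,1,0), (-1,1,0)), ((0,1,-1), (0,1,-1)), ((0,2,-1), (0,2,-1)), ((0,2,1), (0,2,1)), ((0,1,1), (0,1,1))],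
   [((0,0,0), (1,1,0)), ((1,1,0), (1,2,0)), ((1,2,0), (0,3,0)), ((0,3,0), (0,3,0)), ((-1,2,0), (0,3,0)), ((-1,1,0), (0,2,-1)), ((0,1,-1), (0,2,-1)), ((0,2,-1), (0,3,0)), ((0,2,1), (0,3,0)), ((0,1,1), (1,2,0))],
   [((0,0,0), (1,2,0)), ((1,1,0), (0,3,0)), ((1,2,0), (0,3,0)), ((0,3,0), (0,3,0)), ((-1,2,0), (0,3,0)), ((-1,1,0), (0,3,0)), ((0,1,-1), (0,3,0)), ((0,2,-1), (0,3,0)), ((0,2,1), (0,3,0)), ((0,1,1), (0,3,0))],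
   [((0,0,0), (0,3,0)), ((1,1,0), (0,3,0)), ((1,2,0), (0,3,0)), ((0,3,0), (0,3,0)), ((-1,2,0), (0,3,0)), ((-1,1,0), (0,3,0)), ((0,1,-1), (0,3,0)), ((0,2,-1), (0,3,0)), ((0,2,1), (0,3,0)), ((0,1,1), (0,3,0))]]

def tblE : List (List (P3 × P3)) :=
  [[((0,0,0), (0,0,0)), ((1,1,0), (1,1,0)), ((1,2,0), (1,2,0)), ((0,3,0), (0,3,0)), ((-1,2,0), (-1,2,0)), ((-1,1,0), (-1,1,0)), ((0,1,-1), (0,1,-1)), ((0,2,-1), (0,2,-1)), ((0,2,1), (0,2,1)), ((0,1,1), (0,1,1))],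
   [((0,0,0), (-1,1,0)), ((1,1,0), (0,1,-1)), ((1,2,0), (0,1,-1)), ((0,3,0), (-1,2,0)), ((-1,2,0), (-1,2,0)), ((-1,1,0), (-1,2,0)), ((0,1,-1), (-1,2,0)), ((0,2,-1), (-1,2,0)), ((0,2,1), (-1,2,0)), ((0,1,1), (-1,2,0))],
   [((0,0,0), (-1,2,0)), ((1,1,0), (-1,2,0)), ((1,2,0), (-1,2,0)), ((0,3,0), (-1,2,0)), ((-1,2,0), (-1,2,0)), ((-1,1,0), (-1,2,0)), ((0,1,-1), (-1,2,0)), ((0,2,-1), (-1,2,0)), ((0,2,1), (-1,2,0)), ((0,1,1), (-1,2,0))]]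

def tblF : List (List (P3 × P3)) :=
  [[((0,0,0), (0,0,0)), ((1,1,0), (1,1,0)), ((1,2,0), (1,2,0)), ((0,3,0), (0,3,0)), ((-1,2,0), (-1,2,0)), ((-1,1,0), (-1,1,0)), ((0,1,-1), (0,1,-1)), ((0,2,-1), (0,2,-1)), ((0,2,1), (0,2,1)), ((0,1,1), (0,1,1))],
   [((0,0,0), (-1,1,0)), ((1,1,0), (0,0,0)), ((1,2,0), (0,1,-1)), ((0,3,0), (-1,2,0)), ((-1,2,0), (-1,1,0)), ((-1,1,0), (-1,1,0)), ((0,1,-1), (-1,1,0)), ((0,2,-1), (-1,1,0)), ((0,2,1), (-1,1,0)), ((0,1,1), (-1,1,0))],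
   [((0,0,0), (-1,1,0)), ((1,1,0), (-1,1,0)), ((1,2,0), (-1,1,0)), ((0,3,0), (-1,1,0)), ((-1,2,0), (-1,1,0)), ((-1,1,0), (-1,1,0)), ((0,1,-1), (-1,1,0)), ((0,2,-1), (-1,1,0)), ((0,2,1), (-1,1,0)), ((0,1,1), (-1,1,0))]]

def tblG : List (List (P3 × P3)) :=
  [[((0,0,0), (0,0,0)), ((1,1,0), (1,1,0)), ((1,2,0), (1,2,0)), ((0,3,0), (0,3,0)), ((-1,2,0), (-1,2,0)), ((-1,1,0), (-1,1,0)), ((0,1,-1), (0,1,-1)), ((0,2,-1), (0,2,-1)), ((0,2,1), (0,2,1)), ((0,1,1), (0,1,1))],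
   [((0,0,0), (0,1,-1)), ((1,1,0), (0,1,-1)), ((1,2,0), (0,1,-1)), ((0,3,0), (1,2,0)), ((-1,2,0), (0,1,-1)), ((-1,1,0), (0,1,-1)), ((0,1,-1), (0,1,-1)), ((0,2,-1), (0,1,-1)), ((0,2,1), (1,1,0)), ((0,1,1), (0,0,0))],
   [((0,0,0), (0,1,-1)), ((1,1,0), (0,1,-1)), ((1,2,0), (0,1,-1)), ((0,3,0), (0,1,-1)), ((-1,2,0), (0,1,-1)), ((-1,1,0), (0,1,-1)), ((0,1,-1), (0,1,-1)), ((0,2,-1), (0,1,-1)), ((0,2,1), (0,1,-1)), ((0,1,1), (0,1,-1))]]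

def tblH : List (List (P3 × P3)) :=
  [[((0,0,0), (0,0,0)), ((1,1,0), (1,1,0)), ((1,2,0), (1,2,0)), ((0,3,0), (0,3,0)), ((-1,2,0), (-1,2,0)), ((-1,1,0), (-1,1,0)), ((0,1,-1), (0,1,-1)), ((0,2,-1), (0,2,-1)), ((0,2,1), (0,2,1)), ((0,1,1), (0,1,1))],
   [((0,0,0), (1,1,0)), ((1,1,0), (0,2,-1)), ((1,2,0), (0,2,-1)), ((0,3,0), (0,2,-1)), ((-1,2,0), (0,2,-1)), ((-1,1,0), (0,2,-1)), ((0,1,-1), (0,2,-1)), ((0,2,-1), (0,2,-1)), ((0,2,1), (0,3,0)), ((0,1,1), (1,2,0))],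
   [((0,0,0), (0,2,-1)), ((1,1,0), (0,2,-1)), ((1,2,0), (0,2,-1)), ((0,3,0), (0,2,-1)), ((-1,2,0), (0,2,-1)), ((-1,1,0), (0,2,-1)), ((0,1,-1), (0,2,-1)), ((0,2,-1), (0,2,-1)), ((0,2,1), (0,2,-1)), ((0,1,1), (0,2,-1))]]

def tblI : List (List (P3 × P3)) :=
  [[((0,0,0), (0,0,0)), ((1,1,0), (1,1,0)), ((1,2,0), (1,2,0)), ((0,3,0), (0,3,0)), ((-1,2,0), (-1,2,0)), ((-1,1,0), (-1,1,0)), ((0,1,-1), (0,1,-1)), ((0,2,-1), (0,2,-1)), ((0,2,1), (0,2,1)), ((0,1,1), (0,1,1))],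
   [((0,0,0), (1,1,0)), ((1,1,0), (0,2,1)), ((1,2,0), (0,2,1)), ((0,3,0), (0,2,1)), ((-1,2,0), (0,2,1)), ((-1,1,0), (0,2,1)), ((0,1,-1), (1,1,0)), ((0,2,-1), (1,1,0)), ((0,2,1), (0,2,1)), ((0,1,1), (0,2,1))],
   [((0,0,0), (0,2,1)), ((1,1,0), (0,2,1)), ((1,2,0), (0,2,1)), ((0,3,0), (0,2,1)), ((-1,2,0), (0,2,1)), ((-1,1,0), (0,2,1)), ((0,1,-1), (0,2,1)), ((0,2,-1), (0,2,1)), ((0,2,1), (0,2,1)), ((0,1,1), (0,2,1))]]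

def tblJ : List (List (P3 × P3)) :=
  [[((0,0,0), (0,0,0)), ((1,1,0), (1,1,0)), ((1,2,0), (1,2,0)), ((0,3,0), (0,3,0)), ((-1,2,0), (-1,2,0)), ((-1,1,0), (-1,1,0)), ((0,1,-1), (0,1,-1)), ((0,2,-1), (0,2,-1)), ((0,2,1), (0,2,1)), ((0,1,1), (0,1,1))],
   [((0,0,0), (0,1,1)), ((1,1,0), (0,1,1)), ((1,2,0), (0,1,1)), ((0,3,0), (1,2,0)), ((-1,2,0), (0,1,1)), ((-1,1,0), (0,1,1)), ((0,1,-1), (0,0,0)), ((0,2,-1), (1,1,0)), ((0,2,1), (0,1,1)), ((0,1,1), (0,1,1))],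
   [((0,0,0), (0,1,1)), ((1,1,0), (0,1,1)), ((1,2,0), (0,1,1)), ((0,3,0), (0,1,1)), ((-1,2,0), (0,1,1)), ((-1,1,0), (0,1,1)), ((0,1,-1), (0,1,1)), ((0,2,-1), (0,1,1)), ((0,2,1), (0,1,1)), ((0,1,1), (0,1,1))]]

/-- `Π₁²⁶(MSS₁₈, x)` is trivial for every `x ∈ MSS₁₈`. -/
theorem stmt7 : ∀ x ∈ MSS18, Pi1Trivial MSS18 adj26 x := by
  intro x hx
  apply pi1_of_pc
  rw [mem_MSS18] at hx
  simp only [MSS18list, List.mem_cons, List.not_mem_nil, or_false] at hx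
  rcases hx with rfl|rfl|rfl|rfl|rfl|rfl|rfl|rfl|rfl|rfl
  · exact pc_of_tbl tblA 3 (0,0,0) (by decide)
  · exact pc_of_tbl tblB 2 (1,1,0) (by decide)
  · exact pc_of_tbl tblC 2 (1,2,0) (by decide)
  · exact pc_of_tbl tblD 3 (0,3,0) (by decide)
  · exact pc_of_tbl tblE 2 (-1,2,0) (by decide)
  · exact pc_of_tbl tblF 2 (-1,1,0) (by decide)
  · exact pc_of_tbl tblG 2 (0,1,-1) (by decide)
  · exact pc_of_tbl tblH 2 (0,2,-1) (by decide)
  · exact pc_of_tbl tblI 2 (0,2,1) (by decide)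
  · exact pc_of_tbl tblJ 2 (0,1,1) (by decide)
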